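/- arXiv:2505.21939 — 7 statements merged into one kernel-verified Lean document; each statement's English description precedes it below -/
import Mathlib

section
/- Let alpha > 0, let x be a real number with 0 <= x < 1/alpha, and let a, b in [0,1] with a <= alpha*x. If alpha*x*(1 - a*b) >= a + b - 2*a*b, then b <= alpha*x. -/
/-- Key intermediate bound in the `10/3` lower-bound proof: from the
configuration `(x, x, 2x)` inequality one deduces `b ≤ α * x`. -/
theorem stmt_3 (α x a b : ℝ) (hα : 0 < α)
    (hx0 : 0 ≤ x) (hx1 : x < 1 / α)
    (ha0 : 0 ≤ a) (ha1 : a ≤ 1) (hb0 : 0 ≤ b) (hb1 : b ≤ 1)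
    (haux : a ≤ α * x)
    (h : α * x * (1 - a * b) ≥ a + b - 2 * a * b) :
    b ≤ α * x := by
  have ht : α * x < 1 := by
    have := (lt_div_iff₀ hα).mp hx1
    nlinarith
  have hc : 0 < 1 - (2 - α * x) * a := by
    nlinarith [sq_nonneg (1 - α * x), mul_nonneg (sub_nonneg.mpr haux) (by linarith : (0:ℝ) ≤ 2 - α * x)]
  by_contra hb
  push_neg at hb
  nlinarith [mul_pos (sub_pos.mpr hb) hc,
    mul_nonneg ha0 (sq_nonneg (1 - α * x))]
end

section
/- Let alpha >= 2 be a real number, let x be a real number with 1/alpha <= x <= 1 - 1/alpha, and let p, q in [0,1]. Then alpha*(1 - p*q)*min(x, 1-x) >= max( p*(1-q) + (1-p)*q , (1-p)*(1-q) ). -/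
/-- If an LP value lies in `[1/α, 1 - 1/α]`, then `α` times its LP charge
dominates the expected cost of the edge, whether positive or negative. -/
theorem stmt_7 (α x p q : ℝ) (hα : 2 ≤ α)
    (hx1 : 1 / α ≤ x) (hx2 : x ≤ 1 - 1 / α)
    (hp : p ∈ Set.Icc (0 : ℝ) 1) (hq : q ∈ Set.Icc (0 : ℝ) 1) :
    α * (1 - p * q) * min x (1 - x) ≥
      max (p * (1 - q) + (1 - p) * q) ((1 - p) * (1 - q)) := by
  obtain ⟨hp0, hp1⟩ := hp
  obtain ⟨hq0, hq1⟩ := hq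
  have hα0 : (0:ℝ) < α := by linarith
  have hx1' : 1 ≤ α * x := by
    rw [div_le_iff₀ hα0] at hx1; linarith
  have hx2' : 1 ≤ α * (1 - x) := by
    have : 1 / α ≤ 1 - x := by linarith
    rw [div_le_iff₀ hα0] at this; linarith
  have hpq : 1 - p * q ≥ 0 := by nlinarith
  have hm : α * (1 - p * q) * min x (1 - x) ≥ 1 - p * q := by
    rcases min_cases x (1 - x) with ⟨h, _⟩ | ⟨h, _⟩ <;> rw [h] <;> nlinarith
  rw [ge_iff_le, max_le_iff]
  constructor <;> nlinarith
end

section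
/- Let alpha be a real number with 2 <= alpha < 4, and let a, b in [0,1] satisfy: (i) alpha*(1 - b) >= 2*(1 - b) + (1 - b)^2; (ii) 1 - a^2 + 2*(a + b - 2*a*b) <= alpha*( (3/4)*(1 - a^2) + (1/2)*(1 - a*b) ); (iii) a <= 1 - sqrt(1 - alpha/4). Then alpha > 2.11. -/
/-- Lower bound for Chromatic Correlation Clustering: the three conditions
coming from the configurations `(1/2,1/2,1)` with `(∘,∘,-)`,
`(1/4,1/4,1/2)` with `(+,+,∘)`, and the bound `f⁺(1/4) ≤ 1 - √(1 - α/4)`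
force `α > 2.11`. Here `a = f⁺(1/4)` and `b = f∘(1/2)`. -/
theorem stmt_8 (α a b : ℝ) (hα1 : 2 ≤ α) (hα2 : α < 4)
    (ha : a ∈ Set.Icc (0 : ℝ) 1) (hb : b ∈ Set.Icc (0 : ℝ) 1)
    (h1 : α * (1 - b) ≥ 2 * (1 - b) + (1 - b) ^ 2)
    (h2 : 1 - a ^ 2 + 2 * (a + b - 2 * a * b) ≤
      α * ((3 / 4) * (1 - a ^ 2) + (1 / 2) * (1 - a * b)))
    (h3 : a ≤ 1 - Real.sqrt (1 - α / 4)) :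
    α > 2.11 := by
  obtain ⟨ha0, ha1⟩ := ha
  obtain ⟨hb0, hb1⟩ := hb
  have hs : Real.sqrt (1 - α / 4) ^ 2 = 1 - α / 4 :=
    Real.sq_sqrt (by linarith)
  have hs0 : 0 ≤ Real.sqrt (1 - α / 4) := Real.sqrt_nonneg _
  have key : 8 * a - 4 * a ^ 2 ≤ α := by
    nlinarith [sq_nonneg (Real.sqrt (1 - α / 4) - (1 - a))]
  clear h3 hs hs0
  have hb3 : 3 - α ≤ b := by
    rcases lt_or_ge b 1 with hlt | hge
    · nlinarith
    · linarith
  by_contra h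
  push_neg at h
  nlinarith [sq_nonneg (1 - a), sq_nonneg a, mul_nonneg ha0 hb0,
    mul_nonneg ha0 (sub_nonneg.2 hb3), sq_nonneg (a - 1/3),
    mul_nonneg (mul_nonneg ha0 ha0) hb0, sq_nonneg (α - 2.11)]
end

section
/- For all x, y, z, p_x, p_y, p_z in [0,1], letting M = max(1/2, 1 - x, 1 - y, 1 - z), it holds that 2*( (1 - p_y*p_z)*M + (1 - p_x*p_z)*M + (1 - p_x*p_y)*z ) >= (1 - p_y*p_z) + (1 - p_x*p_z) + ( p_x + p_y - 2*p_x*p_y ). -/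
/-- The `(∘,∘,+)` triangle case in the analysis of the LP-CCC algorithm:
with `M = max(1/2, 1-x, 1-y, 1-z)`, twice the LP charge dominates the
expected algorithmic cost. -/
theorem stmt_14 (x y z px py pz : ℝ)
    (hx : x ∈ Set.Icc (0 : ℝ) 1) (hy : y ∈ Set.Icc (0 : ℝ) 1)
    (hz : z ∈ Set.Icc (0 : ℝ) 1)
    (hpx : px ∈ Set.Icc (0 : ℝ) 1) (hpy : py ∈ Set.Icc (0 : ℝ) 1)
    (hpz : pz ∈ Set.Icc (0 : ℝ) 1) :
    2 * ((1 - py * pz) * max (1 / 2) (max (1 - x) (max (1 - y) (1 - z))) +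
        (1 - px * pz) * max (1 / 2) (max (1 - x) (max (1 - y) (1 - z))) +
        (1 - px * py) * z) ≥
      (1 - py * pz) + (1 - px * pz) + (px + py - 2 * px * py) := by
  obtain ⟨hx0, hx1⟩ := hx
  obtain ⟨hy0, hy1⟩ := hy
  obtain ⟨hz0, hz1⟩ := hz
  obtain ⟨hpx0, hpx1⟩ := hpx
  obtain ⟨hpy0, hpy1⟩ := hpy
  obtain ⟨hpz0, hpz1⟩ := hpz
  set M := max (1 / 2) (max (1 - x) (max (1 - y) (1 - z))) with hM
  have hM1 : M ≥ 1 / 2 := le_max_left _ _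
  have hM2 : M ≥ 1 - z := le_trans (le_max_right _ _)
    (le_trans (le_max_right _ _) (le_max_right _ _))
  have h1 : 1 - py ≤ 1 - py * pz := by nlinarith
  have h2 : 1 - px ≤ 1 - px * pz := by nlinarith
  have h1' : (0:ℝ) ≤ 1 - py := by linarith
  have h2' : (0:ℝ) ≤ 1 - px := by linarith
  have hxy : (0:ℝ) ≤ 1 - px * py := by nlinarith
  rcases le_or_gt z (1/2) with h | h
  · have hz2 : (0:ℝ) ≤ 1 - 2*z := by linarith
    have hM3 : 1 - 2*z ≤ 2*M - 1 := by linarith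
    have h4 : (1 - py) * (1 - 2*z) ≤ (1 - py * pz) * (2*M - 1) :=
      mul_le_mul h1 hM3 hz2 (by linarith)
    have h5 : (1 - px) * (1 - 2*z) ≤ (1 - px * pz) * (2*M - 1) :=
      mul_le_mul h2 hM3 hz2 (by linarith)
    have h6 : (0:ℝ) ≤ (1 - z) * ((1 - px) * (1 - py)) :=
      mul_nonneg (by linarith) (mul_nonneg h2' h1')
    nlinarith [h4, h5, h6]
  · have h7 : (0:ℝ) ≤ (1 - py * pz) * (2*M - 1) :=
      mul_nonneg (by linarith) (by linarith)
    have h8 : (0:ℝ) ≤ (1 - px * pz) * (2*M - 1) :=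
      mul_nonneg (by linarith) (by linarith)
    have h9 : (0:ℝ) ≤ (1 - px * py) * (2*z - 1) :=
      mul_nonneg hxy (by linarith)
    have h3 : (0:ℝ) ≤ (1 - px) * (1 - py) := mul_nonneg h2' h1'
    nlinarith [h7, h8, h9, h3]
end

section
/- Define f_circ : [0,1] -> [0,1] by f_circ(x) = 1.7*x if x < 0.5 and f_circ(x) = 0.3*x + 0.7 if x >= 0.5. For all x, y, z in [0,1] satisfying the triangle inequalities x <= y + z, y <= z + x, z <= x + y, letting p_x = f_circ(x), p_y = f_circ(y) and M = max(1/2, 1 - x, 1 - y, 1 - z), it holds that 2.15*( (2 - (p_x + p_y)*z)*M + (1 - p_x*p_y)*(1 - z) ) >= (1 - p_y*z) + (1 - p_x*z) + (1 - p_x)*(1 - p_y). -/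
set_option maxHeartbeats 1000000

/-- The rounding function for neutral edges in the LP-CCC algorithm. -/
noncomputable def fcirc (x : ℝ) : ℝ :=
  if x < 0.5 then 1.7 * x else 0.3 * x + 0.7

private lemma case1 (x y z : ℝ) (hx0 : 0 ≤ x) (hx1 : x < 1/2) (hy0 : 0 ≤ y) (hy1 : y < 1/2)
    (hz0 : 0 ≤ z) (hz1 : z ≤ 1) (htz : z ≤ x + y) :
    2.15 * ((2 - (1.7*x + 1.7*y) * z) * (1/2) + (1 - (1.7*x)*(1.7*y)) * (1 - z)) ≥
      (1 - 1.7*y * z) + (1 - 1.7*x * z) + (1 - 1.7*x) * (1 - 1.7*y) := by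
  nlinarith [mul_nonneg (sub_nonneg.2 hz1) (mul_nonneg hx0 hy0), mul_nonneg hx0 hy0,
    mul_nonneg (mul_nonneg hx0 hy0) hz0, sq_nonneg (x-y), sq_nonneg (x+y-1),
    mul_nonneg hz0 (sub_nonneg.2 hz1), mul_nonneg (sub_nonneg.2 htz) hz0,
    mul_nonneg (sub_nonneg.2 hx1.le) (sub_nonneg.2 hy1.le),
    mul_nonneg (mul_nonneg (sub_nonneg.2 hx1.le) (sub_nonneg.2 hy1.le)) hz0,
    mul_nonneg (mul_nonneg (sub_nonneg.2 hx1.le) (sub_nonneg.2 hy1.le)) (sub_nonneg.2 hz1)]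

private lemma case2 (x y z : ℝ) (hx0 : 0 ≤ x) (hx1 : x < 1/2) (hy1 : 1/2 ≤ y) (hy2 : y ≤ 1)
    (hz0 : 0 ≤ z) (hz1 : z ≤ 1) (hty : y ≤ z + x) :
    2.15 * ((2 - (1.7*x + (0.3*y+0.7)) * z) * (1-x) + (1 - (1.7*x)*(0.3*y+0.7)) * (1 - z)) ≥
      (1 - (0.3*y+0.7) * z) + (1 - 1.7*x * z) + (1 - 1.7*x) * (1 - (0.3*y+0.7)) := by
  nlinarith [mul_nonneg hx0 (sub_nonneg.2 hz1), mul_nonneg (sub_nonneg.2 hx1.le) (sub_nonneg.2 hz1),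
    mul_nonneg (sub_nonneg.2 hx1.le) hz0, mul_nonneg hx0 hz0,
    mul_nonneg (sub_nonneg.2 hy2) (sub_nonneg.2 hz1), mul_nonneg (sub_nonneg.2 hty) hz0,
    mul_nonneg (sub_nonneg.2 hty) (sub_nonneg.2 hz1),
    mul_nonneg (mul_nonneg hx0 (sub_nonneg.2 hx1.le)) hz0,
    mul_nonneg (mul_nonneg hx0 (sub_nonneg.2 hy2)) hz0, sq_nonneg (z-1), sq_nonneg (y-z),
    mul_nonneg (mul_nonneg (sub_nonneg.2 hx1.le) (sub_nonneg.2 hy2)) hz0]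

private lemma case4 (x y z : ℝ) (hx1 : 1/2 ≤ x) (hx2 : x ≤ 1) (hy1 : 1/2 ≤ y) (hy2 : y ≤ 1)
    (hz0 : 0 ≤ z) (hz1 : z ≤ 1) :
    2.15 * ((2 - ((0.3*x+0.7) + (0.3*y+0.7)) * z) * (1/2) + (1 - (0.3*x+0.7)*(0.3*y+0.7)) * (1 - z)) ≥
      (1 - (0.3*y+0.7) * z) + (1 - (0.3*x+0.7) * z) + (1 - (0.3*x+0.7)) * (1 - (0.3*y+0.7)) := by
  nlinarith [mul_nonneg (sub_nonneg.2 hx2) (sub_nonneg.2 hy2),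
    mul_nonneg (sub_nonneg.2 hx2) (sub_nonneg.2 hz1),
    mul_nonneg (sub_nonneg.2 hy2) (sub_nonneg.2 hz1),
    mul_nonneg (sub_nonneg.2 hz1) hz0,
    mul_nonneg (mul_nonneg (sub_nonneg.2 hx2) (sub_nonneg.2 hy2)) hz0,
    mul_nonneg (mul_nonneg (sub_nonneg.2 hx2) (sub_nonneg.2 hy2)) (sub_nonneg.2 hz1),
    mul_nonneg (mul_nonneg (sub_nonneg.2 hx2) (sub_nonneg.2 hz1)) (by linarith : (0:ℝ) ≤ x - 1/2),
    mul_nonneg (mul_nonneg (sub_nonneg.2 hy2) (sub_nonneg.2 hz1)) (by linarith : (0:ℝ) ≤ y - 1/2),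
    mul_nonneg (sub_nonneg.2 hx2) (by linarith : (0:ℝ) ≤ y - 1/2),
    mul_nonneg (sub_nonneg.2 hy2) (by linarith : (0:ℝ) ≤ x - 1/2),
    mul_nonneg (sub_nonneg.2 hz1) (by linarith : (0:ℝ) ≤ x - 1/2),
    mul_nonneg (sub_nonneg.2 hz1) (by linarith : (0:ℝ) ≤ y - 1/2),
    sq_nonneg (x-y), sq_nonneg (1-z), sq_nonneg (x+y-2*z)]

/-- The `(∘,∘,-)` triangle case in the analysis of the LP-CCC algorithm:
`2.15` times the LP charge dominates the expected algorithmic cost. -/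
theorem stmt_15 (x y z : ℝ)
    (hx : x ∈ Set.Icc (0 : ℝ) 1) (hy : y ∈ Set.Icc (0 : ℝ) 1)
    (hz : z ∈ Set.Icc (0 : ℝ) 1)
    (htx : x ≤ y + z) (hty : y ≤ z + x) (htz : z ≤ x + y) :
    2.15 * ((2 - (fcirc x + fcirc y) * z) *
        max (1 / 2) (max (1 - x) (max (1 - y) (1 - z))) +
        (1 - fcirc x * fcirc y) * (1 - z)) ≥
      (1 - fcirc y * z) + (1 - fcirc x * z) + (1 - fcirc x) * (1 - fcirc y) := by
  obtain ⟨hx0, hx1⟩ := hx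
  obtain ⟨hy0, hy1⟩ := hy
  obtain ⟨hz0, hz1⟩ := hz
  set M := max (1 / 2) (max (1 - x) (max (1 - y) (1 - z))) with hM
  have hM1 : (1:ℝ)/2 ≤ M := le_max_left _ _
  have hM2 : 1 - x ≤ M := le_trans (le_max_left _ _) (le_max_right _ _)
  have hM3 : 1 - y ≤ M :=
    le_trans (le_trans (le_max_left _ _) (le_max_right _ _)) (le_max_right _ _)
  unfold fcirc
  split_ifs with h1 h2 h2
  · -- x < 0.5, y < 0.5
    have h1' : x < 1/2 := by norm_num at h1 ⊢; linarith
    have h2' : y < 1/2 := by norm_num at h2 ⊢; linarith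
    have hc : (0:ℝ) ≤ 2 - (1.7*x + 1.7*y) * z := by nlinarith
    have hle : (2 - (1.7*x + 1.7*y) * z) * (1/2) ≤ (2 - (1.7*x + 1.7*y) * z) * M :=
      mul_le_mul_of_nonneg_left hM1 hc
    have := case1 x y z hx0 h1' hy0 h2' hz0 hz1 htz
    nlinarith
  · -- x < 0.5, y ≥ 0.5
    have h1' : x < 1/2 := by norm_num at h1 ⊢; linarith
    have hc : (0:ℝ) ≤ 2 - (1.7*x + (0.3*y+0.7)) * z := by nlinarith
    have hle : (2 - (1.7*x + (0.3*y+0.7)) * z) * (1-x) ≤ (2 - (1.7*x + (0.3*y+0.7)) * z) * M :=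
      mul_le_mul_of_nonneg_left hM2 hc
    have h2' : 1/2 ≤ y := by norm_num at h2 ⊢; linarith
    have := case2 x y z hx0 h1' h2' hy1 hz0 hz1 hty
    nlinarith
  · -- x ≥ 0.5, y < 0.5 : symmetric to case2
    have h2' : y < 1/2 := by norm_num at h2 ⊢; linarith
    have hc : (0:ℝ) ≤ 2 - ((0.3*x+0.7) + 1.7*y) * z := by nlinarith
    have hle : (2 - ((0.3*x+0.7) + 1.7*y) * z) * (1-y) ≤ (2 - ((0.3*x+0.7) + 1.7*y) * z) * M :=
      mul_le_mul_of_nonneg_left hM3 hc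
    have h1' : 1/2 ≤ x := by norm_num at h1 ⊢; linarith
    have := case2 y x z hy0 h2' h1' hx1 hz0 hz1 (by linarith)
    nlinarith
  · -- x ≥ 0.5, y ≥ 0.5
    have h1' : 1/2 ≤ x := by norm_num at h1 ⊢; linarith
    have h2' : 1/2 ≤ y := by norm_num at h2 ⊢; linarith
    have hc : (0:ℝ) ≤ 2 - ((0.3*x+0.7) + (0.3*y+0.7)) * z := by nlinarith
    have hle : (2 - ((0.3*x+0.7) + (0.3*y+0.7)) * z) * (1/2) ≤
        (2 - ((0.3*x+0.7) + (0.3*y+0.7)) * z) * M :=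
      mul_le_mul_of_nonneg_left hM1 hc
    have := case4 x y z h1' hx1 h2' hy1 hz0 hz1
    nlinarith
end

section
/- Define f_plus : [0,1] -> [0,1] by f_plus(x) = 0 if x < 0.19, f_plus(x) = ((x - 0.19)/(0.5095 - 0.19))^2 if 0.19 <= x < 0.5095, and f_plus(x) = 1 if x >= 0.5095; define f_circ : [0,1] -> [0,1] by f_circ(x) = 1.7*x if x < 0.5 and f_circ(x) = 0.3*x + 0.7 if x >= 0.5. For all x, y, z in [0,1] satisfying the triangle inequalities x <= y + z, y <= z + x, z <= x + y, letting p_x = f_circ(x), p_y = f_plus(y), p_z = f_plus(z) and M = max(1/2, 1 - x, 1 - y, 1 - z), it holds that 2.15*( (1 - p_y*p_z)*M + (1 - p_x*p_z)*y + (1 - p_x*p_y)*z ) >= (1 - p_y*p_z) + ( p_x + p_z - 2*p_x*p_z ) + ( p_x + p_y - 2*p_x*p_y ). -/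
/-- The Chawla et al. rounding function for positive (same-color) edges. -/
noncomputable def fplus (x : ℝ) : ℝ :=
  if x < 0.19 then 0
  else if x < 0.5095 then ((x - 0.19) / (0.5095 - 0.19)) ^ 2
  else 1

theorem P010 (x y v M : ℝ) (hx0 : 0 ≤ x) (hxc : x < 0.5)
    (hy0 : 0 ≤ y) (hyc : y < 0.19) (hv0 : 0 ≤ v) (hv1 : v ≤ 1)
    (htx : x ≤ y + (0.19 + 0.3195 * v)) (hM : 1 - y ≤ M) :
    2.15 * (M + (1 - 1.7 * x * v^2) * y + (0.19 + 0.3195 * v)) ≥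
      1 + (1.7 * x + v^2 - 2 * (1.7 * x) * v^2) + 1.7 * x := by
  nlinarith [mul_nonneg hx0 (sq_nonneg (v-1)), mul_nonneg hy0 (sq_nonneg (v-1)),
    mul_nonneg hx0 hy0, mul_nonneg (mul_nonneg hx0 hy0) (sq_nonneg (v-1)),
    sq_nonneg (v-1), mul_nonneg hx0 hv0, mul_nonneg hy0 hv0]

theorem P011 (x y v M : ℝ) (hxc : 0.5 ≤ x) (hx1 : x ≤ 1)
    (hy0 : 0 ≤ y) (hyc : y < 0.19) (hv0 : 0 ≤ v) (hv1 : v ≤ 1)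
    (htx : x ≤ y + (0.19 + 0.3195 * v)) (hM : 1 - y ≤ M) :
    2.15 * (M + (1 - (0.3 * x + 0.7) * v^2) * y + (0.19 + 0.3195 * v)) ≥
      1 + ((0.3 * x + 0.7) + v^2 - 2 * (0.3 * x + 0.7) * v^2) + (0.3 * x + 0.7) := by
  have hx0 : (0:ℝ) ≤ x := by linarith
  nlinarith [mul_nonneg hx0 (sq_nonneg (v-1)), mul_nonneg hy0 (sq_nonneg (v-1)),
    mul_nonneg hx0 hy0, mul_nonneg (mul_nonneg hx0 hy0) (sq_nonneg (v-1)),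
    sq_nonneg (v-1), mul_nonneg hy0 hv0, mul_nonneg hx0 hv0]

theorem P110 (x u v M : ℝ) (hx0 : 0 ≤ x) (hxc : x < 0.5)
    (hu0 : 0 ≤ u) (huv : u ≤ v) (hv1 : v ≤ 1)
    (htx : x ≤ (0.19 + 0.3195 * u) + (0.19 + 0.3195 * v))
    (hM : 1 - (0.19 + 0.3195 * u) ≤ M) :
    2.15 * ((1 - u^2 * v^2) * M + (1 - 1.7 * x * v^2) * (0.19 + 0.3195 * u)
      + (1 - 1.7 * x * u^2) * (0.19 + 0.3195 * v)) ≥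
    (1 - u^2 * v^2) + (1.7 * x + v^2 - 2 * (1.7 * x) * v^2)
      + (1.7 * x + u^2 - 2 * (1.7 * x) * u^2) := by
  have hv0 : 0 ≤ v := le_trans hu0 huv
  have h1uv : (0:ℝ) ≤ 1 - u * v := by nlinarith [mul_nonneg hu0 (by linarith : (0:ℝ) ≤ 1 - v)]
  have hcoef : (0:ℝ) ≤ 1 - u^2 * v^2 := by
    nlinarith [mul_nonneg h1uv (mul_nonneg hu0 hv0), h1uv]
  have hMM : (0:ℝ) ≤ (1 - u^2 * v^2) * (M - (1 - (0.19 + 0.3195 * u))) :=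
    mul_nonneg hcoef (by linarith)
  have hxh : (0:ℝ) ≤ 1/2 - x := by linarith
  have huv2 : (0:ℝ) ≤ v - u := by linarith
  have hv12 : (0:ℝ) ≤ 1 - v := by linarith
  have htx2 : (0:ℝ) ≤ (0.19 + 0.3195 * u) + (0.19 + 0.3195 * v) - x := by linarith
  linarith [hMM, hx0, hxh, (mul_nonneg hxh huv2), (mul_nonneg hxh hv12), (mul_nonneg huv2 huv2), (mul_nonneg huv2 hv12), (mul_nonneg hv12 htx2), (mul_nonneg (mul_nonneg hx0 hxh) huv2), (mul_nonneg (mul_nonneg hx0 huv2) htx2), (mul_nonneg (mul_nonneg hxh hxh) hv12), (mul_nonneg (mul_nonneg hxh hu0) huv2), (mul_nonneg (mul_nonneg hxh hu0) hv12), (mul_nonneg (mul_nonneg hxh huv2) hv12), (mul_nonneg (mul_nonneg hu0 huv2) huv2), (mul_nonneg (mul_nonneg hu0 huv2) hv12), (mul_nonneg (mul_nonneg huv2 huv2) hv12), (mul_nonneg (mul_nonneg hv12 hv12) htx2), (mul_nonneg (mul_nonneg (mul_nonneg hx0 hx0) hu0) huv2), (mul_nonneg (mul_nonneg (mul_nonneg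 hx0 hx0) huv2) huv2), (mul_nonneg (mul_nonneg (mul_nonneg hx0 hx0) hv12) htx2), (mul_nonneg (mul_nonneg (mul_nonneg hx0 hxh) hxh) hv12), (mul_nonneg (mul_nonneg (mul_nonneg hx0 hu0) hu0) huv2), (mul_nonneg (mul_nonneg (mul_nonneg hx0 hu0) huv2) huv2), (mul_nonneg (mul_nonneg (mul_nonneg hx0 hu0) hv12) htx2), (mul_nonneg (mul_nonneg (mul_nonneg hu0 hu0) hu0) huv2), (mul_nonneg (mul_nonneg (mul_nonneg hu0 hu0) huv2) hv12), (mul_nonneg (mul_nonneg (mul_nonneg hu0 huv2) huv2) hv12), (mul_nonneg (mul_nonneg (mul_nonneg hu0 hv12) hv12) htx2), (mul_nonneg (mul_nonneg (mul_nonneg (mul_nonneg hx0 hu0) hu0) huv2) huv2), (mul_nonneg (mul_nonneg (mul_nonneg (mul_nonneg hx0 hu0) hu0) huv2) hv12), (mul_nonneg (mul_nonneg (mul_nonneg (mul_nonneg hx0 hu0) hu0) hv12) hv12), (mul_nonneg (mul_nonneg (mul_nonneg (mul_nonneg hu0 hu0) hu0) hu0) huv2), (mul_nonneg (mul_nonneg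 (mul_nonneg (mul_nonneg hu0 hu0) hu0) hu0) htx2), (mul_nonneg (mul_nonneg (mul_nonneg (mul_nonneg hu0 hu0) hu0) huv2) huv2), (mul_nonneg (mul_nonneg (mul_nonneg (mul_nonneg hu0 hu0) hu0) hv12) hv12)]

theorem P111 (x u v M : ℝ) (hxc : 0.5 ≤ x) (hx1 : x ≤ 1)
    (hu0 : 0 ≤ u) (huv : u ≤ v) (hv1 : v ≤ 1)
    (htx : x ≤ (0.19 + 0.3195 * u) + (0.19 + 0.3195 * v))
    (hM : 1 - (0.19 + 0.3195 * u) ≤ M) :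
    2.15 * ((1 - u^2 * v^2) * M + (1 - (0.3 * x + 0.7) * v^2) * (0.19 + 0.3195 * u)
      + (1 - (0.3 * x + 0.7) * u^2) * (0.19 + 0.3195 * v)) ≥
    (1 - u^2 * v^2) + ((0.3 * x + 0.7) + v^2 - 2 * (0.3 * x + 0.7) * v^2)
      + ((0.3 * x + 0.7) + u^2 - 2 * (0.3 * x + 0.7) * u^2) := by
  have hv0 : 0 ≤ v := le_trans hu0 huv
  have h1uv : (0:ℝ) ≤ 1 - u * v := by nlinarith [mul_nonneg hu0 (by linarith : (0:ℝ) ≤ 1 - v)]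
  have hcoef : (0:ℝ) ≤ 1 - u^2 * v^2 := by
    nlinarith [mul_nonneg h1uv (mul_nonneg hu0 hv0), h1uv]
  have hMM : (0:ℝ) ≤ (1 - u^2 * v^2) * (M - (1 - (0.19 + 0.3195 * u))) :=
    mul_nonneg hcoef (by linarith)
  have hxh : (0:ℝ) ≤ x - 1/2 := by linarith
  have hx12 : (0:ℝ) ≤ 1 - x := by linarith
  have huv2 : (0:ℝ) ≤ v - u := by linarith
  have hv12 : (0:ℝ) ≤ 1 - v := by linarith
  have htx2 : (0:ℝ) ≤ (0.19 + 0.3195 * u) + (0.19 + 0.3195 * v) - x := by linarith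
  linarith [hMM, huv2, (mul_nonneg hxh hx12), (mul_nonneg hxh hv12), (mul_nonneg hx12 hu0), (mul_nonneg hx12 huv2), (mul_nonneg hx12 htx2), (mul_nonneg huv2 huv2), (mul_nonneg huv2 hv12), (mul_nonneg hv12 htx2), (mul_nonneg (mul_nonneg hxh hu0) hv12), (mul_nonneg (mul_nonneg hxh huv2) hv12), (mul_nonneg (mul_nonneg hx12 hu0) huv2), (mul_nonneg (mul_nonneg hu0 huv2) huv2), (mul_nonneg (mul_nonneg hu0 hv12) htx2), (mul_nonneg (mul_nonneg huv2 huv2) huv2), (mul_nonneg (mul_nonneg huv2 hv12) htx2), (mul_nonneg (mul_nonneg (mul_nonneg hxh hu0) hu0) huv2), (mul_nonneg (mul_nonneg (mul_nonneg hxh hu0) huv2) huv2), (mul_nonneg (mul_nonneg (mul_nonneg hxh hu0) hv12) hv12), (mul_nonneg (mul_nonneg (mul_nonneg hu0 hu0) huv2) hv12), (mul_nonneg (mul_nonneg (mul_nonneg hu0 huv2) huv2) hv12), (mul_nonneg (mul_nonneg (mul_nonneg hu0 hv12) hv12) htx2), (mul_nonneg (mul_nonneg (mul_nonneg (mul_nonneg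 hu0 hu0) hu0) hv12) hv12)]

theorem P120 (x u z M : ℝ) (hx0 : 0 ≤ x) (hxc : x < 0.5)
    (hu0 : 0 ≤ u) (hu1 : u ≤ 1) (hz5 : 0.5095 ≤ z) (hz1 : z ≤ 1)
    (hM : 1/2 ≤ M) :
    2.15 * ((1 - u^2) * M + (1 - 1.7 * x) * (0.19 + 0.3195 * u)
      + (1 - 1.7 * x * u^2) * z) ≥
    (1 - u^2) + (1.7 * x + 1 - 2 * (1.7 * x))
      + (1.7 * x + u^2 - 2 * (1.7 * x) * u^2) := by
  have hu12 : (0:ℝ) ≤ 1 - u := by linarith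
  have hcoef : (0:ℝ) ≤ 1 - u^2 := by nlinarith [mul_nonneg hu12 hu0]
  have hMM : (0:ℝ) ≤ (1 - u^2) * (M - 1/2) := mul_nonneg hcoef (by linarith)
  have hxh : (0:ℝ) ≤ 1/2 - x := by linarith
  have hz52 : (0:ℝ) ≤ z - 0.5095 := by linarith
  have hz12 : (0:ℝ) ≤ 1 - z := by linarith
  linarith [hMM, hxh, hu12, hz52, (mul_nonneg hxh hu12), (mul_nonneg hxh hz52), (mul_nonneg hu0 hu12), (mul_nonneg (mul_nonneg hx0 hu12) hz52), (mul_nonneg (mul_nonneg hxh hu0) hu12), (mul_nonneg (mul_nonneg (mul_nonneg hx0 hu0) hu0) hz12), (mul_nonneg (mul_nonneg (mul_nonneg hx0 hu0) hu12) hz52)]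

theorem P121 (x u z M : ℝ) (hxc : 0.5 ≤ x) (hx1 : x ≤ 1)
    (hu0 : 0 ≤ u) (hu1 : u ≤ 1) (hz5 : 0.5095 ≤ z) (hz1 : z ≤ 1)
    (hM : 1/2 ≤ M) :
    2.15 * ((1 - u^2) * M + (1 - (0.3 * x + 0.7)) * (0.19 + 0.3195 * u)
      + (1 - (0.3 * x + 0.7) * u^2) * z) ≥
    (1 - u^2) + ((0.3 * x + 0.7) + 1 - 2 * (0.3 * x + 0.7))
      + ((0.3 * x + 0.7) + u^2 - 2 * (0.3 * x + 0.7) * u^2) := by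
  have hu12 : (0:ℝ) ≤ 1 - u := by linarith
  have hcoef : (0:ℝ) ≤ 1 - u^2 := by nlinarith [mul_nonneg hu12 hu0]
  have hMM : (0:ℝ) ≤ (1 - u^2) * (M - 1/2) := mul_nonneg hcoef (by linarith)
  have hxh : (0:ℝ) ≤ x - 1/2 := by linarith
  have hx12 : (0:ℝ) ≤ 1 - x := by linarith
  have hz52 : (0:ℝ) ≤ z - 0.5095 := by linarith
  have hz12 : (0:ℝ) ≤ 1 - z := by linarith
  linarith [hMM, hx12, hu12, (mul_nonneg hx12 hu12), (mul_nonneg hx12 hz52), (mul_nonneg hu0 hu12), (mul_nonneg hu12 hz52), (mul_nonneg (mul_nonneg hxh hu12) hu12), (mul_nonneg (mul_nonneg hxh hu12) hz52), (mul_nonneg (mul_nonneg hu0 hu12) hz52), (mul_nonneg (mul_nonneg (mul_nonneg hxh hu0) hu12) hz52)]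

set_option maxHeartbeats 4000000 in
/-- The `(∘,+,+)` triangle case in the analysis of the LP-CCC algorithm:
`2.15` times the LP charge dominates the expected algorithmic cost. -/
theorem stmt_16 (x y z : ℝ)
    (hx : x ∈ Set.Icc (0 : ℝ) 1) (hy : y ∈ Set.Icc (0 : ℝ) 1)
    (hz : z ∈ Set.Icc (0 : ℝ) 1)
    (htx : x ≤ y + z) (hty : y ≤ z + x) (htz : z ≤ x + y) :
    2.15 * ((1 - fplus y * fplus z) *
        max (1 / 2) (max (1 - x) (max (1 - y) (1 - z))) +
        (1 - fcirc x * fplus z) * y + (1 - fcirc x * fplus y) * z) ≥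
      (1 - fplus y * fplus z) +
        (fcirc x + fplus z - 2 * fcirc x * fplus z) +
        (fcirc x + fplus y - 2 * fcirc x * fplus y) := by
  obtain ⟨hx0, hx1⟩ := hx
  obtain ⟨hy0, hy1⟩ := hy
  obtain ⟨hz0, hz1⟩ := hz
  set M := max (1 / 2 : ℝ) (max (1 - x) (max (1 - y) (1 - z))) with hMdef
  have hM0 : (1/2 : ℝ) ≤ M := le_max_left _ _
  have hMx : 1 - x ≤ M := le_trans (le_max_left _ _) (le_max_right _ _)
  have hMy : 1 - y ≤ M := le_trans (le_trans (le_max_left _ _) (le_max_right _ _)) (le_max_right _ _)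
  have hMz : 1 - z ≤ M := le_trans (le_trans (le_max_right _ _) (le_max_right _ _)) (le_max_right _ _)
  unfold fplus fcirc
  split_ifs with h1 h2 h3 h4 h5 h6 h7 h8 h9 h10 h11 h12 h13 h14 h15 h16 h17
  -- case (y<.19, z<.19, x<.5)
  · nlinarith [mul_nonneg hy0 hz0, sq_nonneg (y-z), sq_nonneg (y+z-1), hM0, hMy, hMz]
  -- case (y<.19, z<.19, x≥.5): contradiction
  · linarith
  -- case (y<.19, z mid, x<.5)
  · set v := (z - 0.19) / (0.5095 - 0.19) with hv
    have hzv : z = 0.19 + 0.3195 * v := by rw [hv]; field_simp; ring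
    have hv0 : (0:ℝ) ≤ v := div_nonneg (by linarith [not_lt.1 h2]) (by norm_num)
    have hv1 : v ≤ 1 := by rw [hv, div_le_one (by norm_num)]; linarith
    rw [hzv]
    have key := P010 x y v M hx0 h5 hy0 h1 hv0 hv1 (by linarith) hMy
    linarith [key]
  -- case (y<.19, z mid, x≥.5)
  · set v := (z - 0.19) / (0.5095 - 0.19) with hv
    have hzv : z = 0.19 + 0.3195 * v := by rw [hv]; field_simp; ring
    have hv0 : (0:ℝ) ≤ v := div_nonneg (by linarith [not_lt.1 h2]) (by norm_num)
    have hv1 : v ≤ 1 := by rw [hv, div_le_one (by norm_num)]; linarith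
    rw [hzv]
    have key := P011 x y v M (not_lt.1 h5) hx1 hy0 h1 hv0 hv1 (by linarith) hMy
    linarith [key]
  -- case (y<.19, z≥.5095, x<.5)
  · nlinarith [mul_nonneg hy0 hz0, sq_nonneg (y-z), sq_nonneg (y+z-1), hM0, hMy, hMz]
  -- case (y<.19, z≥.5095, x≥.5)
  · nlinarith [mul_nonneg hy0 hz0, sq_nonneg (y-z), sq_nonneg (y+z-1), hM0, hMy, hMz]
  -- case (y mid, z<.19, x<.5)
  · set u := (y - 0.19) / (0.5095 - 0.19) with hu
    have hyu : y = 0.19 + 0.3195 * u := by rw [hu]; field_simp; ring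
    have hu0 : (0:ℝ) ≤ u := div_nonneg (by linarith [not_lt.1 h1]) (by norm_num)
    have hu1 : u ≤ 1 := by rw [hu, div_le_one (by norm_num)]; linarith
    rw [hyu]
    have key := P010 x z u M hx0 h9 hz0 h8 hu0 hu1 (by linarith) hMz
    linarith [key]
  -- case (y mid, z<.19, x≥.5)
  · set u := (y - 0.19) / (0.5095 - 0.19) with hu
    have hyu : y = 0.19 + 0.3195 * u := by rw [hu]; field_simp; ring
    have hu0 : (0:ℝ) ≤ u := div_nonneg (by linarith [not_lt.1 h1]) (by norm_num)
    have hu1 : u ≤ 1 := by rw [hu, div_le_one (by norm_num)]; linarith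
    rw [hyu]
    have key := P011 x z u M (not_lt.1 h9) hx1 hz0 h8 hu0 hu1 (by linarith) hMz
    linarith [key]
  -- case (y mid, z mid, x<.5)
  · set u := (y - 0.19) / (0.5095 - 0.19) with hu
    set v := (z - 0.19) / (0.5095 - 0.19) with hv
    have hyu : y = 0.19 + 0.3195 * u := by rw [hu]; field_simp; ring
    have hzv : z = 0.19 + 0.3195 * v := by rw [hv]; field_simp; ring
    have hu0 : (0:ℝ) ≤ u := div_nonneg (by linarith [not_lt.1 h1]) (by norm_num)
    have hu1 : u ≤ 1 := by rw [hu, div_le_one (by norm_num)]; linarith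
    have hv0 : (0:ℝ) ≤ v := div_nonneg (by linarith [not_lt.1 h8]) (by norm_num)
    have hv1 : v ≤ 1 := by rw [hv, div_le_one (by norm_num)]; linarith
    rw [hyu, hzv]
    rcases le_total u v with h | h
    · have key := P110 x u v M hx0 h11 hu0 h hv1 (by linarith) (by linarith)
      linarith [key]
    · have key := P110 x v u M hx0 h11 hv0 h hu1 (by linarith) (by linarith)
      linarith [key]
  -- case (y mid, z mid, x≥.5)
  · set u := (y - 0.19) / (0.5095 - 0.19) with hu
    set v := (z - 0.19) / (0.5095 - 0.19) with hv
    have hyu : y = 0.19 + 0.3195 * u := by rw [hu]; field_simp; ring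
    have hzv : z = 0.19 + 0.3195 * v := by rw [hv]; field_simp; ring
    have hu0 : (0:ℝ) ≤ u := div_nonneg (by linarith [not_lt.1 h1]) (by norm_num)
    have hu1 : u ≤ 1 := by rw [hu, div_le_one (by norm_num)]; linarith
    have hv0 : (0:ℝ) ≤ v := div_nonneg (by linarith [not_lt.1 h8]) (by norm_num)
    have hv1 : v ≤ 1 := by rw [hv, div_le_one (by norm_num)]; linarith
    rw [hyu, hzv]
    rcases le_total u v with h | h
    · have key := P111 x u v M (not_lt.1 h11) hx1 hu0 h hv1 (by linarith) (by linarith)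
      linarith [key]
    · have key := P111 x v u M (not_lt.1 h11) hx1 hv0 h hu1 (by linarith) (by linarith)
      linarith [key]
  -- case (y mid, z≥.5095, x<.5)
  · set u := (y - 0.19) / (0.5095 - 0.19) with hu
    have hyu : y = 0.19 + 0.3195 * u := by rw [hu]; field_simp; ring
    have hu0 : (0:ℝ) ≤ u := div_nonneg (by linarith [not_lt.1 h1]) (by norm_num)
    have hu1 : u ≤ 1 := by rw [hu, div_le_one (by norm_num)]; linarith
    rw [hyu]
    have key := P120 x u z M hx0 h12 hu0 hu1 (not_lt.1 h10) hz1 hM0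
    linarith [key]
  -- case (y mid, z≥.5095, x≥.5)
  · set u := (y - 0.19) / (0.5095 - 0.19) with hu
    have hyu : y = 0.19 + 0.3195 * u := by rw [hu]; field_simp; ring
    have hu0 : (0:ℝ) ≤ u := div_nonneg (by linarith [not_lt.1 h1]) (by norm_num)
    have hu1 : u ≤ 1 := by rw [hu, div_le_one (by norm_num)]; linarith
    rw [hyu]
    have key := P121 x u z M (not_lt.1 h12) hx1 hu0 hu1 (not_lt.1 h10) hz1 hM0
    linarith [key]
  -- case (y≥.5095, z<.19, x<.5)
  · nlinarith [mul_nonneg hy0 hz0, sq_nonneg (y-z), sq_nonneg (y+z-1), hM0, hMy, hMz]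
  -- case (y≥.5095, z<.19, x≥.5)
  · nlinarith [mul_nonneg hy0 hz0, sq_nonneg (y-z), sq_nonneg (y+z-1), hM0, hMy, hMz]
  -- case (y≥.5095, z mid, x<.5)
  · set v := (z - 0.19) / (0.5095 - 0.19) with hv
    have hzv : z = 0.19 + 0.3195 * v := by rw [hv]; field_simp; ring
    have hv0 : (0:ℝ) ≤ v := div_nonneg (by linarith [not_lt.1 h13]) (by norm_num)
    have hv1 : v ≤ 1 := by rw [hv, div_le_one (by norm_num)]; linarith
    rw [hzv]
    have key := P120 x v y M hx0 h16 hv0 hv1 (not_lt.1 h7) hy1 hM0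
    linarith [key]
  -- case (y≥.5095, z mid, x≥.5)
  · set v := (z - 0.19) / (0.5095 - 0.19) with hv
    have hzv : z = 0.19 + 0.3195 * v := by rw [hv]; field_simp; ring
    have hv0 : (0:ℝ) ≤ v := div_nonneg (by linarith [not_lt.1 h13]) (by norm_num)
    have hv1 : v ≤ 1 := by rw [hv, div_le_one (by norm_num)]; linarith
    rw [hzv]
    have key := P121 x v y M (not_lt.1 h16) hx1 hv0 hv1 (not_lt.1 h7) hy1 hM0
    linarith [key]
  -- case (y≥.5095, z≥.5095, x<.5)
  · nlinarith [mul_nonneg hy0 hz0, sq_nonneg (y-z), sq_nonneg (y+z-1), hM0, hMy, hMz]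
  -- case (y≥.5095, z≥.5095, x≥.5)
  · nlinarith [mul_nonneg hy0 hz0, sq_nonneg (y-z), sq_nonneg (y+z-1), hM0, hMy, hMz]
end

section
/- For all x, y, z, p in [0,1], letting M = max(1/2, 1 - x, 1 - y, 1 - z), it holds that 2*( (1 - y*z)*M + (1 - p*z)*(1 - y) + (1 - p*y)*(1 - z) ) >= (1 - y*z) + (1 - p)*(1 - y) + (1 - p)*(1 - z). -/
/-- The `(∘,-,-)` triangle case in the analysis of the LP-CCC algorithm:
with `M = max(1/2, 1-x, 1-y, 1-z)`, twice the LP charge dominates the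
expected algorithmic cost (negative edges are rounded by the identity). -/
theorem stmt_18 (x y z p : ℝ)
    (hx : x ∈ Set.Icc (0 : ℝ) 1) (hy : y ∈ Set.Icc (0 : ℝ) 1)
    (hz : z ∈ Set.Icc (0 : ℝ) 1) (hp : p ∈ Set.Icc (0 : ℝ) 1) :
    2 * ((1 - y * z) * max (1 / 2) (max (1 - x) (max (1 - y) (1 - z))) +
        (1 - p * z) * (1 - y) + (1 - p * y) * (1 - z)) ≥
      (1 - y * z) + (1 - p) * (1 - y) + (1 - p) * (1 - z) := by
  obtain ⟨hy0, hy1⟩ := hy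
  obtain ⟨hz0, hz1⟩ := hz
  obtain ⟨hp0, hp1⟩ := hp
  have hM : max (1 / 2) (max (1 - x) (max (1 - y) (1 - z))) ≥ 1 / 2 := le_max_left _ _
  nlinarith [mul_nonneg hy0 hz0, mul_nonneg hp0 hz0, mul_nonneg hp0 hy0,
    mul_nonneg (sub_nonneg.2 hy1) (sub_nonneg.2 hz1),
    mul_nonneg (sub_nonneg.2 hp1) hz0, mul_nonneg (sub_nonneg.2 hp1) hy0,
    mul_le_one₀ hy1 hz0 hz1]
end
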